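/- Assume Γ is connected. Let A be an abelian group equipped with an action of W by additive automorphisms, and let a_i ∈ A (i ∈ I) be elements such that s_i · a_j = a_j whenever i and j are not joined by an edge of Γ (in particular whenever i = j), and s_i · a_j = s_j · a_i whenever i and j are joined by an edge. Then there exists a unique W-equivariant group homomorphism f : ℤ[Φ/±] → A with f(t_{[e_i]}) = a_i for all i ∈ I. -/

import Mathlib

set_option linter.unusedSectionVars false

open Finset

noncomputable section

namespace ADE

variable {I : Type*} [Fintype I] [DecidableEq I]

/-- The coefficient matrix of the bilinear form attached to the graph `Γ`:
`-2` on the diagonal, `1` for adjacent pairs of vertices, `0` otherwise. -/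
def cartan (G : SimpleGraph I) [DecidableRel G.Adj] : Matrix I I ℤ :=
  Matrix.of fun i j => if i = j then -2 else if G.Adj i j then 1 else 0

/-- The symmetric bilinear form `B` on `ℤ^I` determined by
`B(e_i,e_i) = -2`, `B(e_i,e_j) = 1` for adjacent `i ≠ j`, and `0` otherwise. -/
def Bform (G : SimpleGraph I) [DecidableRel G.Adj] : LinearMap.BilinForm ℤ (I → ℤ) :=
  Matrix.toBilin' (cartan G)

/-- Negative definiteness of the induced real bilinear form on `ℝ^I`. -/
def NegDef (G : SimpleGraph I) [DecidableRel G.Adj] : Prop :=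
  ∀ v : I → ℝ, v ≠ 0 → (∑ i, ∑ j, v i * (cartan G i j : ℝ) * v j) < 0

/-- `α ∈ ℤ^I` is a root when `B(α,α) = -2`. -/
def IsRoot (G : SimpleGraph I) [DecidableRel G.Adj] (α : I → ℤ) : Prop :=
  Bform G α α = -2

variable (G : SimpleGraph I) [DecidableRel G.Adj]

lemma cartan_symm (i j : I) : cartan G i j = cartan G j i := by
  rcases eq_or_ne i j with h | h
  · subst h; rfl
  · by_cases hadj : G.Adj i j
    · simp [cartan, h, h.symm, hadj, hadj.symm]
    · have h' : ¬ G.Adj j i := fun hc => hadj hc.symm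
      simp [cartan, h, h.symm, hadj, h']

lemma Bform_apply (v w : I → ℤ) :
    Bform G v w = ∑ i, ∑ j, v i * cartan G i j * w j :=
  Matrix.toBilin'_apply _ _ _

lemma Bform_comm (v w : I → ℤ) : Bform G v w = Bform G w v := by
  rw [Bform_apply, Bform_apply, Finset.sum_comm]
  exact Finset.sum_congr rfl fun j _ => Finset.sum_congr rfl fun i _ => by
    rw [cartan_symm]; ring

lemma cartan_diag (i : I) : cartan G i i = -2 := by simp [cartan]

lemma Bform_single (i j : I) :
    Bform G (Pi.single i 1) (Pi.single j 1) = cartan G i j := by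
  rw [Bform_apply]
  simp [Pi.single_apply]

lemma Bform_single_self (i : I) :
    Bform G (Pi.single i 1) (Pi.single i 1) = -2 := by
  rw [Bform_single, cartan_diag]

/-- `IsRoot` is preserved by negation. -/
lemma isRoot_neg {α : I → ℤ} (h : IsRoot G α) : IsRoot G (-α) := by
  unfold IsRoot at h ⊢
  simpa [map_neg] using h

/-- The simple root `e_i` is a root. -/
lemma isRoot_single (i : I) : IsRoot G (Pi.single i 1) := Bform_single_self G i

/-- The reflection `s_i : v ↦ v + B(v,e_i)·e_i`. -/
def reflect (i : I) (v : I → ℤ) : I → ℤ :=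
  v + Bform G v (Pi.single i 1) • Pi.single i 1

/-- The reflection `s_i` as a linear map. -/
def reflectLM (i : I) : (I → ℤ) →ₗ[ℤ] (I → ℤ) :=
  LinearMap.id + (LinearMap.toSpanSingleton ℤ (I → ℤ) (Pi.single i 1)).comp
    ((Bform G).flip (Pi.single i 1))

lemma reflectLM_apply (i : I) (v : I → ℤ) : reflectLM G i v = reflect G i v := by
  simp [reflectLM, reflect, LinearMap.toSpanSingleton_apply]

/-- Reflections are isometries of `B`. -/
lemma Bform_reflect (i : I) (v w : I → ℤ) :
    Bform G (reflect G i v) (reflect G i w) = Bform G v w := by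
  have h1 : Bform G (Pi.single i 1) w = Bform G w (Pi.single i 1) := Bform_comm G _ _
  simp only [reflect, map_add, map_smul, LinearMap.add_apply, LinearMap.smul_apply,
    smul_eq_mul, Bform_single_self, h1]
  ring

lemma reflect_reflect (i : I) (v : I → ℤ) : reflect G i (reflect G i v) = v := by
  have h : Bform G (reflect G i v) (Pi.single i 1) = - Bform G v (Pi.single i 1) := by
    simp only [reflect, map_add, LinearMap.add_apply, map_smul, LinearMap.smul_apply,
      smul_eq_mul, Bform_single_self]
    ring
  conv_lhs => rw [reflect, h]
  rw [reflect, neg_smul, add_neg_cancel_right]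

/-- The reflection `s_i` as a linear automorphism of `ℤ^I`. -/
def reflectEquiv (i : I) : (I → ℤ) ≃ₗ[ℤ] (I → ℤ) where
  __ := reflectLM G i
  invFun := reflect G i
  left_inv := fun v => by
    show reflect G i (reflectLM G i v) = v
    rw [reflectLM_apply]; exact reflect_reflect G i v
  right_inv := fun v => by
    show reflectLM G i (reflect G i v) = v
    rw [reflectLM_apply]; exact reflect_reflect G i v

lemma reflectEquiv_apply (i : I) (v : I → ℤ) : reflectEquiv G i v = reflect G i v :=
  reflectLM_apply G i v

/-- The Weyl group `W`: the subgroup of the group of `ℤ`-linear automorphisms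
of `ℤ^I` generated by the reflections `s_i`. -/
def Weyl : Subgroup ((I → ℤ) ≃ₗ[ℤ] (I → ℤ)) :=
  Subgroup.closure (Set.range (reflectEquiv G))

lemma reflectEquiv_inv (i : I) : (reflectEquiv G i)⁻¹ = reflectEquiv G i := by
  apply LinearEquiv.toLinearMap_injective
  apply LinearMap.ext
  intro v
  have h1 : ((reflectEquiv G i)⁻¹ : (I → ℤ) ≃ₗ[ℤ] (I → ℤ)) v = (reflectEquiv G i).symm v := rfl
  show ((reflectEquiv G i)⁻¹ : (I → ℤ) ≃ₗ[ℤ] (I → ℤ)) v = reflectEquiv G i v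
  rw [h1, reflectEquiv_apply]
  rfl

lemma isRoot_reflect (i : I) {α : I → ℤ} (h : IsRoot G α) : IsRoot G (reflect G i α) := by
  unfold IsRoot at h ⊢
  rw [Bform_reflect]; exact h

/-- Every element of the Weyl group maps roots to roots. -/
lemma weyl_isRoot {w : (I → ℤ) ≃ₗ[ℤ] (I → ℤ)} (hw : w ∈ Weyl G) :
    ∀ α : I → ℤ, IsRoot G α → IsRoot G (w α) := by
  have main : (∀ α, IsRoot G α → IsRoot G (w α)) ∧ (∀ α, IsRoot G α → IsRoot G (w⁻¹ α)) := by
    induction hw using Subgroup.closure_induction with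
    | mem x hx =>
        obtain ⟨i, rfl⟩ := hx
        constructor
        · intro α hα; rw [reflectEquiv_apply]; exact isRoot_reflect G i hα
        · intro α hα; rw [reflectEquiv_inv, reflectEquiv_apply]; exact isRoot_reflect G i hα
    | one => exact ⟨fun α h => h, fun α h => by simpa using h⟩
    | mul x y hx hy ihx ihy =>
        refine ⟨fun α h => ?_, fun α h => ?_⟩
        · exact ihx.1 _ (ihy.1 _ h)
        · rw [mul_inv_rev]
          exact ihy.2 _ (ihx.2 _ h)
    | inv x hx ihx =>
        refine ⟨ihx.2, fun α h => ?_⟩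
        rw [inv_inv]
        exact ihx.1 α h
  exact main.1

/-- The type of roots. -/
def Root := {α : I → ℤ // IsRoot G α}

/-- The simple root `e_i` as an element of `Root`. -/
def simpleRoot (i : I) : Root G := ⟨Pi.single i 1, isRoot_single G i⟩

/-- Negation of a root. -/
def negRoot (α : Root G) : Root G := ⟨-α.1, isRoot_neg G α.2⟩

/-- The generator `s_i` as an element of the Weyl group. -/
def sGen (i : I) : ↥(Weyl G) := ⟨reflectEquiv G i, Subgroup.subset_closure ⟨i, rfl⟩⟩

/-- Action of a Weyl group element on roots. -/
def rootSmul (w : ↥(Weyl G)) (α : Root G) : Root G :=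
  ⟨(w : (I → ℤ) ≃ₗ[ℤ] (I → ℤ)) α.1, weyl_isRoot G w.2 α.1 α.2⟩

/-- The equivalence relation identifying a root `α` with `±α`. -/
def rootSetoid : Setoid (Root G) where
  r α β := α.1 = β.1 ∨ α.1 = -β.1
  iseqv := by
    refine ⟨fun α => Or.inl rfl, ?_, ?_⟩
    · rintro α β (h | h)
      · exact Or.inl h.symm
      · exact Or.inr (by rw [h, neg_neg])
    · rintro α β γ (h₁ | h₁) (h₂ | h₂)
      · exact Or.inl (h₁.trans h₂)
      · exact Or.inr (h₁.trans h₂)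
      · exact Or.inr (by rw [h₁, h₂])
      · exact Or.inl (by rw [h₁, h₂, neg_neg])

/-- `Φ/±`: the quotient of the set of roots by the involution `α ↦ -α`. -/
def RootMod := Quotient (rootSetoid G)

/-- The class of a root in `Φ/±`. -/
def rcls (α : Root G) : RootMod G := Quotient.mk (rootSetoid G) α

/-- The class `[e_i]` of a simple root in `Φ/±`. -/
def cls (i : I) : RootMod G := rcls G (simpleRoot G i)

/-- Action of a Weyl group element on `Φ/±`. -/
def rmodSmul (w : ↥(Weyl G)) : RootMod G → RootMod G :=
  Quotient.map (rootSmul G w) (by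
    rintro α β (h | h)
    · exact Or.inl (by simp [rootSmul, h])
    · exact Or.inr (by simp [rootSmul, h, map_neg]))

/-- The action of `w ∈ W` on `ℤΦ` (the free abelian group on the roots). -/
def wZPhi (w : ↥(Weyl G)) : (Root G →₀ ℤ) →+ (Root G →₀ ℤ) :=
  Finsupp.mapDomain.addMonoidHom (rootSmul G w)

/-- The action of `w ∈ W` on `ℤ[Φ/±]`. -/
def wZQ (w : ↥(Weyl G)) : (RootMod G →₀ ℤ) →+ (RootMod G →₀ ℤ) :=
  Finsupp.mapDomain.addMonoidHom (rmodSmul G w)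

/-- The canonical projection `π : ℤΦ → ℤ[Φ/±]`, `T_α ↦ t_{[α]}`. -/
def piHom : (Root G →₀ ℤ) →+ (RootMod G →₀ ℤ) :=
  Finsupp.mapDomain.addMonoidHom (rcls G)

/-- The action of `w ∈ W` on `ℚ ⊗ ℤΦ = (Φ →₀ ℚ)`. -/
def wZPhiQ (w : ↥(Weyl G)) : (Root G →₀ ℚ) →ₗ[ℚ] (Root G →₀ ℚ) :=
  Finsupp.lmapDomain ℚ ℚ (rootSmul G w)

/-- The action of `w ∈ W` on `ℚ ⊗ ℤ[Φ/±] = (Φ/± →₀ ℚ)`. -/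
def wZQQ (w : ↥(Weyl G)) : (RootMod G →₀ ℚ) →ₗ[ℚ] (RootMod G →₀ ℚ) :=
  Finsupp.lmapDomain ℚ ℚ (rmodSmul G w)

/-- The projection `ℚ ⊗ ℤΦ → ℚ ⊗ ℤ[Φ/±]`. -/
def piHomQ : (Root G →₀ ℚ) →ₗ[ℚ] (RootMod G →₀ ℚ) :=
  Finsupp.lmapDomain ℚ ℚ (rcls G)

/-- The subgroup `P̄ ⊂ ℤΦ` generated by the elements `T_α - T_{-α}`. -/
def Pbar : AddSubgroup (Root G →₀ ℤ) :=
  AddSubgroup.closure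
    {x | ∃ α : Root G, x = Finsupp.single α 1 - Finsupp.single (negRoot G α) 1}

end ADE


open ADE

variable {I : Type*} [Fintype I] [DecidableEq I]

/-!
Negative definiteness makes `B(v, v) ≤ -2` for every nonzero `v` (the form is even), so a root
cannot have coordinates of both signs, and a positive root `α ≠ e_k` stays positive under `s_k`.
Since `∑ α_k B(α, e_k) = -2`, every non-simple positive root can be lowered in height by some
`s_k` with `B(α, e_k) = -1`; hence every class of `Φ/±` is `w [e_i]`, which gives uniqueness.

For existence, define `F` on positive roots by this descent, `F e_j = a_j` and
`F α = s_k · F (s_k α)` for a chosen `k`. The heart of the proof is `F (s_i α) = s_i · F α`,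
by induction on the height: the chosen `k` is reconciled with `i` through `s_i² = 1`, the
commutation of `s_i, s_k` for non-adjacent `i, k` and the braid relation for adjacent ones, and
at the bottom of the induction these become exactly the hypotheses on the `a_i`. Then
`F(±α) := F α` is `W`-equivariant on `Φ/±` and extends linearly to `ℤ[Φ/±]`.
-/

namespace ADE

variable {G : SimpleGraph I} [DecidableRel G.Adj]

local notation "ε" i:max => (Pi.single i (1 : ℤ))

theorem Bform_add_self (v w : I → ℤ) :
    Bform G (v + w) (v + w) = Bform G v v + 2 * Bform G v w + Bform G w w := by
  simp only [map_add, LinearMap.add_apply, Bform_comm G w v]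
  ring

theorem Bform_single_smul_self (i : I) (c : ℤ) :
    Bform G (Pi.single i c) (Pi.single i c) = -2 * (c * c) := by
  rw [← mul_one c, ← smul_eq_mul, Pi.single_smul', map_smul, map_smul, LinearMap.smul_apply,
    Bform_single_self, smul_eq_mul, smul_eq_mul]
  ring

theorem even_Bform_self (v : I → ℤ) : Even (Bform G v v) := by
  rw [← Finset.univ_sum_single v]
  refine Finset.sum_induction _ (fun u => Even (Bform G u u)) (fun u w hu hw => ?_) (by simp)
    fun i _ => ⟨-(v i * v i), ?_⟩
  · rw [Bform_add_self]
    exact (hu.add (even_two_mul _)).add hw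
  · rw [Bform_single_smul_self]
    ring

theorem NegDef.Bform_self_neg (hneg : NegDef G) {v : I → ℤ} (hv : v ≠ 0) :
    Bform G v v < 0 := by
  have hv' : (fun i => (v i : ℝ)) ≠ 0 := fun h =>
    hv (funext fun i => by simpa using congrFun h i)
  have := hneg _ hv'
  rw [Bform_apply]
  exact_mod_cast this

theorem NegDef.Bform_self_nonpos (hneg : NegDef G) (v : I → ℤ) : Bform G v v ≤ 0 := by
  rcases eq_or_ne v 0 with rfl | hv
  · simp
  · exact (hneg.Bform_self_neg hv).le

theorem NegDef.Bform_self_le_neg_two (hneg : NegDef G) {v : I → ℤ} (hv : v ≠ 0) :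
    Bform G v v ≤ -2 := by
  obtain ⟨m, hm⟩ := even_Bform_self (G := G) v
  have := hneg.Bform_self_neg hv
  omega

theorem cartan_nonneg_of_ne {i j : I} (h : i ≠ j) :
    0 ≤ cartan G i j := by
  simp only [cartan, Matrix.of_apply, if_neg h]
  split_ifs <;> norm_num

theorem Bform_single_single_of_ne {i j : I} (h : i ≠ j) :
    Bform G (ε i) (ε j) = if G.Adj i j then 1 else 0 := by
  simp [Bform_single, cartan, h]

theorem Bform_single_single_eq_zero_or_one {i j : I} (h : i ≠ j) :
    Bform G (ε i) (ε j) = 0 ∨ Bform G (ε i) (ε j) = 1 := by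
  rw [Bform_single_single_of_ne h]
  split_ifs <;> simp

theorem adj_of_Bform_single_single_eq_one {i j : I} (h : Bform G (ε i) (ε j) = 1) :
    G.Adj i j := by
  have hne : i ≠ j := by
    rintro rfl
    rw [Bform_single_self] at h
    omega
  by_contra hadj
  rw [Bform_single_single_of_ne hne, if_neg hadj] at h
  omega

theorem Bform_nonneg_of_mul_eq_zero {p q : I → ℤ} (hp : 0 ≤ p) (hq : 0 ≤ q)
    (hpq : ∀ i, p i * q i = 0) : 0 ≤ Bform G p q := by
  rw [Bform_apply]
  refine Finset.sum_nonneg fun i _ => Finset.sum_nonneg fun j _ => ?_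
  rcases eq_or_ne i j with rfl | hij
  · rw [mul_right_comm, hpq, zero_mul]
  · exact mul_nonneg (mul_nonneg (hp i) (cartan_nonneg_of_ne hij)) (hq j)

theorem IsRoot.ne_zero {α : I → ℤ} (hα : IsRoot G α) : α ≠ 0 := by
  rintro rfl
  simp [IsRoot] at hα

theorem Bform_sub_self_of_isRoot {α β : I → ℤ} (hα : IsRoot G α) (hβ : IsRoot G β) :
    Bform G (α - β) (α - β) = -4 - 2 * Bform G α β := by
  rw [sub_eq_add_neg, Bform_add_self]
  simp only [map_neg, LinearMap.neg_apply, neg_neg]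
  rw [hα, hβ]
  ring

theorem NegDef.neg_two_le_Bform (hneg : NegDef G) {α β : I → ℤ} (hα : IsRoot G α)
    (hβ : IsRoot G β) : -2 ≤ Bform G α β := by
  have := hneg.Bform_self_nonpos (α - β)
  rw [Bform_sub_self_of_isRoot hα hβ] at this
  omega

theorem NegDef.eq_of_Bform_eq_neg_two (hneg : NegDef G) {α β : I → ℤ} (hα : IsRoot G α)
    (hβ : IsRoot G β) (h : Bform G α β = -2) : α = β := by
  by_contra hne
  have := hneg.Bform_self_neg (sub_ne_zero.2 hne)
  rw [Bform_sub_self_of_isRoot hα hβ, h] at this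
  omega

theorem ne_single_of_Bform_ne {v : I → ℤ} {i : I} (h : Bform G v (ε i) ≠ -2) :
    v ≠ ε i := by
  rintro rfl
  exact h (Bform_single_self G i)

theorem NegDef.Bform_single_eq_zero_or_neg_one (hneg : NegDef G) {α : I → ℤ}
    (hα : IsRoot G α) {i : I} (hle : Bform G α (ε i) ≤ 0) (hne : α ≠ ε i) :
    Bform G α (ε i) = 0 ∨ Bform G α (ε i) = -1 := by
  have := hneg.neg_two_le_Bform hα (isRoot_single G i)
  have : Bform G α (ε i) ≠ -2 := fun h =>
    hne (hneg.eq_of_Bform_eq_neg_two hα (isRoot_single G i) h)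
  omega

theorem NegDef.nonneg_or_nonpos (hneg : NegDef G) {α : I → ℤ} (hα : IsRoot G α) :
    0 ≤ α ∨ α ≤ 0 := by
  by_contra! h
  have hp : α⁺ ≠ 0 := fun h0 => h.2 (posPart_eq_zero.1 h0)
  have hq : α⁻ ≠ 0 := fun h0 => h.1 (negPart_eq_zero.1 h0)
  have hpq : 0 ≤ Bform G α⁺ α⁻ := Bform_nonneg_of_mul_eq_zero (posPart_nonneg α)
    (negPart_nonneg α) fun i => by
      rcases le_total (α i) 0 with hi | hi
      · simp [posPart_eq_zero.2 hi]
      · simp [negPart_eq_zero.2 hi]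
  have hsplit :
      Bform G α α = Bform G α⁺ α⁺ - 2 * Bform G α⁺ α⁻ + Bform G α⁻ α⁻ := by
    conv_lhs => rw [← posPart_sub_negPart α, sub_eq_add_neg, Bform_add_self]
    simp only [map_neg, LinearMap.neg_apply, neg_neg]
    ring
  have := hneg.Bform_self_le_neg_two hp
  have := hneg.Bform_self_le_neg_two hq
  rw [hα] at hsplit
  omega

theorem Bform_reflect_left (k : I) (v w : I → ℤ) :
    Bform G (reflect G k v) w = Bform G v w + Bform G v (ε k) * Bform G (ε k) w := by
  simp only [reflect, map_add, LinearMap.add_apply, map_smul, LinearMap.smul_apply, smul_eq_mul]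

theorem reflect_of_Bform_eq_zero {v : I → ℤ} {i : I} (h : Bform G v (ε i) = 0) :
    reflect G i v = v := by
  rw [reflect, h, zero_smul, add_zero]

theorem reflect_neg (i : I) (v : I → ℤ) : reflect G i (-v) = -reflect G i v := by
  simp only [reflect, map_neg, LinearMap.neg_apply, neg_smul, neg_add]

theorem reflect_single_self (i : I) : reflect G i (ε i) = -ε i := by
  rw [reflect, Bform_single_self]
  module

theorem reflect_comm {i k : I} (h : Bform G (ε i) (ε k) = 0) (v : I → ℤ) :
    reflect G i (reflect G k v) = reflect G k (reflect G i v) := by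
  have h' : Bform G (ε k) (ε i) = 0 := by rw [Bform_comm, h]
  simp only [reflect, map_add, LinearMap.add_apply, map_smul,
    LinearMap.smul_apply, smul_eq_mul, h, h', mul_zero, add_zero]
  abel

theorem reflect_braid {i k : I} (h : Bform G (ε i) (ε k) = 1) (v : I → ℤ) :
    reflect G i (reflect G k (reflect G i v)) = reflect G k (reflect G i (reflect G k v)) := by
  have h' : Bform G (ε k) (ε i) = 1 := by rw [Bform_comm, h]
  simp only [reflect, map_add, LinearMap.add_apply, map_smul, LinearMap.smul_apply, smul_eq_mul,
    h, h', Bform_single_self, mul_one, mul_neg]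
  module

theorem reflect_reflect_single_of_Bform_eq_one {i k : I} (h : Bform G (ε i) (ε k) = 1) :
    reflect G i (reflect G k (ε i)) = ε k := by
  have h' : Bform G (ε k) (ε i) = 1 := by rw [Bform_comm, h]
  simp only [reflect, map_add, LinearMap.add_apply, map_smul, LinearMap.smul_apply, smul_eq_mul,
    h, h', Bform_single_self]
  module

def height (v : I → ℤ) : ℤ := ∑ i, v i

theorem height_reflect (i : I) (v : I → ℤ) :
    height (reflect G i v) = height v + Bform G v (ε i) := by
  simp [height, reflect, Finset.sum_add_distrib, ← Finset.mul_sum, Finset.sum_pi_single']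

theorem height_reflect_lt {α : I → ℤ} {k : I} (hk : Bform G α (ε k) < 0) :
    height (reflect G k α) < height α := by
  rw [height_reflect]
  omega

theorem IsRoot.height_pos {α : I → ℤ} (hα : IsRoot G α) (hα₀ : 0 ≤ α) :
    0 < height α :=
  Fintype.sum_pos (lt_of_le_of_ne hα₀ hα.ne_zero.symm)

theorem Bform_self_eq_sum (α : I → ℤ) : Bform G α α = ∑ k, α k * Bform G α (ε k) := by
  have h : ∑ k, α k • ε k = α := by
    simp_rw [← Pi.single_smul', smul_eq_mul, mul_one, Finset.univ_sum_single]
  nth_rewrite 2 [← h]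
  simp only [map_sum, map_smul, smul_eq_mul]

theorem IsRoot.exists_Bform_single_neg {α : I → ℤ} (hα : IsRoot G α) (hα₀ : 0 ≤ α) :
    ∃ k, Bform G α (ε k) < 0 := by
  by_contra! h
  have := Finset.sum_nonneg fun k (_ : k ∈ Finset.univ) => mul_nonneg (hα₀ k) (h k)
  rw [← Bform_self_eq_sum, hα] at this
  omega

theorem NegDef.reflect_nonneg (hneg : NegDef G) {α : I → ℤ} (hα : IsRoot G α)
    (hα₀ : 0 ≤ α) {i : I} (hne : α ≠ ε i) : 0 ≤ reflect G i α := by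
  refine (hneg.nonneg_or_nonpos (isRoot_reflect G i hα)).resolve_right fun hle => hne ?_
  have hsingle : α = Pi.single i (α i) := by
    ext j
    rcases eq_or_ne j i with rfl | hj
    · simp
    · have := hle j
      simp only [reflect, Pi.add_apply, Pi.smul_apply, Pi.single_eq_of_ne hj, smul_zero,
        add_zero, Pi.zero_apply] at this
      simp [hj, le_antisymm this (hα₀ j)]
  have hsq : α i * α i = 1 := by
    have := hα
    rw [IsRoot, hsingle, Bform_single_smul_self] at this
    omega
  have : α i = 1 := by
    have : (0 : ℤ) ≤ α i := hα₀ i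
    rcases Int.eq_one_or_neg_one_of_mul_eq_one hsq with h | h <;> omega
  rwa [this] at hsingle

theorem Weyl.coe_mul_apply (w w' : Weyl G) (v : I → ℤ) :
    (w * w').1 v = w.1 (w'.1 v) :=
  rfl

theorem Weyl.ext {w w' : Weyl G} (h : ∀ v, w.1 v = w'.1 v) : w = w' :=
  Subtype.ext (LinearEquiv.ext h)

theorem sGen_apply (i : I) (v : I → ℤ) : (sGen G i).1 v = reflect G i v :=
  reflectEquiv_apply G i v

theorem sGen_mul_self (i : I) : sGen G i * sGen G i = 1 :=
  Weyl.ext fun v => by rw [Weyl.coe_mul_apply, sGen_apply, sGen_apply, reflect_reflect]; rfl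

theorem sGen_mul_comm {i k : I} (h : Bform G (ε i) (ε k) = 0) :
    sGen G i * sGen G k = sGen G k * sGen G i :=
  Weyl.ext fun v => by simp only [Weyl.coe_mul_apply, sGen_apply, reflect_comm h]

theorem sGen_braid {i k : I} (h : Bform G (ε i) (ε k) = 1) :
    sGen G i * sGen G k * sGen G i = sGen G k * sGen G i * sGen G k :=
  Weyl.ext fun v => by simp only [Weyl.coe_mul_apply, sGen_apply, reflect_braid h]

@[elab_as_elim]
theorem Weyl.induction_on {p : Weyl G → Prop} (w : Weyl G) (one : p 1)
    (mul : ∀ i w', p w' → p (sGen G i * w')) : p w := by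
  obtain ⟨x, hx⟩ := w
  induction hx using Subgroup.closure_induction_left with
  | one => exact one
  | mul_left x hx y hy ih =>
    obtain ⟨i, rfl⟩ := hx
    exact mul i _ ih
  | inv_mul_cancel x hx y hy ih =>
    obtain ⟨i, rfl⟩ := hx
    convert mul i _ ih using 1
    exact Subtype.ext (congrArg (· * y) (reflectEquiv_inv G i))

theorem NegDef.exists_weyl_apply_single (hneg : NegDef G) {α : I → ℤ} (hα : IsRoot G α)
    (hα₀ : 0 ≤ α) : ∃ (w : Weyl G) (i : I), w.1 (ε i) = α := by
  induction h : (height α).toNat using Nat.strong_induction_on generalizing α with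
  | _ n ih =>
  by_cases hs : ∃ j, α = ε j
  · obtain ⟨j, rfl⟩ := hs
    exact ⟨1, j, rfl⟩
  push Not at hs
  obtain ⟨k, hk⟩ := hα.exists_Bform_single_neg hα₀
  have hβ := isRoot_reflect G k hα
  have hβ₀ := hneg.reflect_nonneg hα hα₀ (hs k)
  have := hβ.height_pos hβ₀
  have := height_reflect_lt hk
  obtain ⟨w, i, hw⟩ := ih _ (by omega) hβ hβ₀ rfl
  exact ⟨sGen G k * w, i, by rw [Weyl.coe_mul_apply, hw, sGen_apply, reflect_reflect]⟩

theorem NegDef.exists_rmodSmul_cls_eq (hneg : NegDef G) (c : RootMod G) :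
    ∃ (w : Weyl G) (i : I), rmodSmul G w (cls G i) = c := by
  induction c using Quotient.ind with
  | _ α =>
  rcases hneg.nonneg_or_nonpos α.2 with h | h
  · obtain ⟨w, i, hw⟩ := hneg.exists_weyl_apply_single α.2 h
    exact ⟨w, i, Quotient.sound (Or.inl hw)⟩
  · obtain ⟨w, i, hw⟩ := hneg.exists_weyl_apply_single (isRoot_neg G α.2) (neg_nonneg.2 h)
    exact ⟨w, i, Quotient.sound (Or.inr hw)⟩

section Lift

open Multiplicative (toAdd)

variable {A : Type*} [AddCommGroup A]

theorem toAdd_map_mul_apply {H : Type*} [Group H] (ρ : H →* Multiplicative (AddAut A))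
    (x y : H) (m : A) : toAdd (ρ (x * y)) m = toAdd (ρ x) (toAdd (ρ y) m) := by
  rw [map_mul]
  rfl

variable (ρ : Weyl G →* Multiplicative (AddAut A)) (a : I → A)

theorem toAdd_sGen_sGen (i : I) (m : A) :
    toAdd (ρ (sGen G i)) (toAdd (ρ (sGen G i)) m) = m := by
  rw [← toAdd_map_mul_apply, sGen_mul_self, map_one]
  rfl

theorem toAdd_sGen_comm {i k : I} (h : Bform G (ε i) (ε k) = 0) (m : A) :
    toAdd (ρ (sGen G i)) (toAdd (ρ (sGen G k)) m) =
      toAdd (ρ (sGen G k)) (toAdd (ρ (sGen G i)) m) := by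
  rw [← toAdd_map_mul_apply, ← toAdd_map_mul_apply, sGen_mul_comm h]

theorem toAdd_sGen_braid {i k : I} (h : Bform G (ε i) (ε k) = 1) (m : A) :
    toAdd (ρ (sGen G i)) (toAdd (ρ (sGen G k)) (toAdd (ρ (sGen G i)) m)) =
      toAdd (ρ (sGen G k)) (toAdd (ρ (sGen G i)) (toAdd (ρ (sGen G k)) m)) := by
  simp only [← toAdd_map_mul_apply, ← mul_assoc, sGen_braid h]

/-- On positive roots the guard `0 < height` is automatic; it is there for termination. -/
def liftPos (α : I → ℤ) : A :=
  if h : ∃ j, α = ε j then a h.choose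
  else if h' : ∃ k, Bform G α (ε k) < 0 ∧ 0 < height (reflect G k α) then
    toAdd (ρ (sGen G h'.choose)) (liftPos (reflect G h'.choose α))
  else 0
termination_by (height α).toNat
decreasing_by
  have := height_reflect_lt h'.choose_spec.1
  have := h'.choose_spec.2
  omega

theorem liftPos_single (j : I) : liftPos ρ a (ε j) = a j := by
  have h : ∃ j', (ε j : I → ℤ) = ε j' := ⟨j, rfl⟩
  have hj : h.choose = j := by simpa [Pi.single_apply, eq_comm] using congrFun h.choose_spec j
  rw [liftPos, dif_pos h, hj]

theorem NegDef.exists_liftPos_descent (hneg : NegDef G) {α : I → ℤ} (hα : IsRoot G α)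
    (hα₀ : 0 ≤ α) (hs : ∀ j, α ≠ ε j) : ∃ k, Bform G α (ε k) = -1 ∧
      liftPos ρ a α = toAdd (ρ (sGen G k)) (liftPos ρ a (reflect G k α)) := by
  have h' : ∃ k, Bform G α (ε k) < 0 ∧ 0 < height (reflect G k α) := by
    obtain ⟨k, hk⟩ := hα.exists_Bform_single_neg hα₀
    exact ⟨k, hk, (isRoot_reflect G k hα).height_pos (hneg.reflect_nonneg hα hα₀ (hs k))⟩
  refine ⟨h'.choose, ?_, by rw [liftPos, dif_neg (not_exists.2 hs), dif_pos h']⟩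
  have := hneg.Bform_single_eq_zero_or_neg_one hα h'.choose_spec.1.le (hs _)
  have := h'.choose_spec.1
  omega

def LiftPosEquivariantBelow (n : ℤ) : Prop :=
  ∀ β : I → ℤ, IsRoot G β → 0 ≤ β → height β < n → ∀ i : I,
    (Bform G β (ε i) = 0 ∨ Bform G β (ε i) = -1) →
      liftPos ρ a (reflect G i β) = toAdd (ρ (sGen G i)) (liftPos ρ a β)

theorem liftPos_reflect_single
    (hnonadj : ∀ i j : I, ¬ G.Adj i j → toAdd (ρ (sGen G i)) (a j) = a j) {i j : I}
    (hb : Bform G (ε j) (ε i) = 0 ∨ Bform G (ε j) (ε i) = -1) :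
    liftPos ρ a (reflect G i (ε j)) = toAdd (ρ (sGen G i)) (liftPos ρ a (ε j)) := by
  have hji : j ≠ i := by
    rintro rfl
    rw [Bform_single_self] at hb
    omega
  have hnadj : ¬ G.Adj i j := fun h => by
    simp [Bform_single_single_of_ne hji, h.symm] at hb
  have hb0 : Bform G (ε j) (ε i) = 0 := by
    rw [Bform_single_single_of_ne hji, if_neg fun h => hnadj h.symm]
  rw [reflect_of_Bform_eq_zero hb0, liftPos_single, hnonadj i j hnadj]

theorem NegDef.liftPos_reflect_of_commute (hneg : NegDef G) {α : I → ℤ} (hα : IsRoot G α)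
    (hα₀ : 0 ≤ α) (IH : LiftPosEquivariantBelow ρ a (height α)) {i k : I}
    (hk : Bform G α (ε k) = -1)
    (hFα : liftPos ρ a α = toAdd (ρ (sGen G k)) (liftPos ρ a (reflect G k α)))
    (hc : Bform G (ε i) (ε k) = 0) (hi : Bform G α (ε i) = 0 ∨ Bform G α (ε i) = -1) :
    liftPos ρ a (reflect G i α) = toAdd (ρ (sGen G i)) (liftPos ρ a α) := by
  set β := reflect G k α
  have hβ₀ : 0 ≤ β :=
    hneg.reflect_nonneg hα hα₀ (ne_single_of_Bform_ne (G := G) (by omega))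
  have hβi : Bform G β (ε i) = Bform G α (ε i) := by
    rw [Bform_reflect_left, Bform_comm G (ε k), hc, mul_zero, add_zero]
  have hFβ := IH β (isRoot_reflect G k hα) hβ₀ (height_reflect_lt (by omega)) i (hβi ▸ hi)
  have hδ : liftPos ρ a (reflect G i α) =
      toAdd (ρ (sGen G k)) (liftPos ρ a (reflect G k (reflect G i α))) := by
    rcases hi with hb | hb
    · rw [reflect_of_Bform_eq_zero hb]
      exact hFα
    · have hδk : Bform G (reflect G i α) (ε k) = -1 := by
        rw [Bform_reflect_left, hk, hc, mul_zero, add_zero]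
      have hδ₀ : 0 ≤ reflect G i α :=
        hneg.reflect_nonneg hα hα₀ (ne_single_of_Bform_ne (G := G) (by omega))
      rw [IH _ (isRoot_reflect G i hα) hδ₀ (height_reflect_lt (by omega)) k (Or.inr hδk),
        toAdd_sGen_sGen]
  calc liftPos ρ a (reflect G i α)
      = toAdd (ρ (sGen G k)) (liftPos ρ a (reflect G i β)) := by rw [hδ, reflect_comm hc]
    _ = toAdd (ρ (sGen G i)) (toAdd (ρ (sGen G k)) (liftPos ρ a β)) := by
      rw [hFβ, toAdd_sGen_comm ρ hc]
    _ = toAdd (ρ (sGen G i)) (liftPos ρ a α) := by rw [hFα]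

theorem NegDef.liftPos_reflect_of_adj (hneg : NegDef G)
    (hadj : ∀ i j : I, G.Adj i j →
      toAdd (ρ (sGen G i)) (a j) = toAdd (ρ (sGen G j)) (a i))
    {α : I → ℤ} (hα : IsRoot G α) (hα₀ : 0 ≤ α)
    (IH : LiftPosEquivariantBelow ρ a (height α))
    {i k : I} (hk : Bform G α (ε k) = -1)
    (hFα : liftPos ρ a α = toAdd (ρ (sGen G k)) (liftPos ρ a (reflect G k α)))
    (hc : Bform G (ε i) (ε k) = 1) (hi : Bform G α (ε i) = 0 ∨ Bform G α (ε i) = -1) :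
    liftPos ρ a (reflect G i α) = toAdd (ρ (sGen G i)) (liftPos ρ a α) := by
  set β := reflect G k α
  have hβ : IsRoot G β := isRoot_reflect G k hα
  have hβ₀ : 0 ≤ β :=
    hneg.reflect_nonneg hα hα₀ (ne_single_of_Bform_ne (G := G) (by omega))
  have hβi : Bform G β (ε i) = Bform G α (ε i) - 1 := by
    rw [Bform_reflect_left, Bform_comm G (ε k), hc, hk]
    ring
  rcases hi with hb | hb
  · set γ := reflect G i β
    have hFγ : liftPos ρ a γ = toAdd (ρ (sGen G i)) (liftPos ρ a β) :=
      IH β hβ hβ₀ (height_reflect_lt (by omega)) i (Or.inr (by omega))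
    have hγk : Bform G γ (ε k) = 0 := by
      rw [Bform_reflect_left, Bform_reflect_left, Bform_single_self, hk, hβi, hb, hc]
      ring
    have hγ₀ : 0 ≤ γ :=
      hneg.reflect_nonneg hβ hβ₀ (ne_single_of_Bform_ne (G := G) (by omega))
    have hγht : height γ < height α :=
      (height_reflect_lt (by omega : Bform G β (ε i) < 0)).trans (height_reflect_lt (by omega))
    have hFγk : liftPos ρ a γ = toAdd (ρ (sGen G k)) (liftPos ρ a γ) := by
      rw [← IH γ (isRoot_reflect G i hβ) hγ₀ hγht k (Or.inl hγk),
        reflect_of_Bform_eq_zero hγk]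
    calc liftPos ρ a (reflect G i α)
        = toAdd (ρ (sGen G k))
            (toAdd (ρ (sGen G i)) (toAdd (ρ (sGen G k)) (liftPos ρ a γ))) := by
          rw [reflect_of_Bform_eq_zero hb, hFα, ← hFγk, hFγ, toAdd_sGen_sGen]
      _ = toAdd (ρ (sGen G i))
            (toAdd (ρ (sGen G k)) (toAdd (ρ (sGen G i)) (liftPos ρ a γ))) :=
          (toAdd_sGen_braid ρ hc _).symm
      _ = toAdd (ρ (sGen G i)) (liftPos ρ a α) := by rw [hFγ, toAdd_sGen_sGen, hFα]
  · -- the bottom of the braid case, where the hypothesis `hadj` enters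
    have hβ : β = ε i := hneg.eq_of_Bform_eq_neg_two hβ (isRoot_single G i) (by omega)
    have hiα : reflect G i α = ε k := by
      rw [← reflect_reflect G k α]
      change reflect G i (reflect G k β) = ε k
      rw [hβ, reflect_reflect_single_of_Bform_eq_one hc]
    rw [hiα, hFα, hβ, liftPos_single, liftPos_single,
      hadj k i (adj_of_Bform_single_single_eq_one hc).symm, toAdd_sGen_sGen]

open Classical in
def liftRoot (α : I → ℤ) : A :=
  if 0 ≤ α then liftPos ρ a α else liftPos ρ a (-α)

theorem liftRoot_single (i : I) : liftRoot ρ a (ε i) = a i := by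
  rw [liftRoot, if_pos (Pi.single_nonneg.2 zero_le_one), liftPos_single]

theorem NegDef.liftRoot_neg (hneg : NegDef G) {α : I → ℤ} (hα : IsRoot G α) :
    liftRoot ρ a (-α) = liftRoot ρ a α := by
  rcases hneg.nonneg_or_nonpos hα with h | h
  · have : ¬ 0 ≤ -α := fun h' => hα.ne_zero (le_antisymm (neg_nonneg.1 h') h)
    rw [liftRoot, liftRoot, if_neg this, if_pos h, neg_neg]
  · have : ¬ 0 ≤ α := fun h' => hα.ne_zero (le_antisymm h h')
    rw [liftRoot, liftRoot, if_pos (neg_nonneg.2 h), if_neg this]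

theorem wZQ_single (w : Weyl G) (c : RootMod G) (m : ℤ) :
    wZQ G w (Finsupp.single c m) = Finsupp.single (rmodSmul G w c) m :=
  Finsupp.mapDomain_single

theorem NegDef.equivariant_hom_ext (hneg : NegDef G) {f f' : (RootMod G →₀ ℤ) →+ A}
    (hf : ∀ w x, f (wZQ G w x) = toAdd (ρ w) (f x))
    (hf' : ∀ w x, f' (wZQ G w x) = toAdd (ρ w) (f' x))
    (h : ∀ i, f (Finsupp.single (cls G i) 1) = f' (Finsupp.single (cls G i) 1)) : f = f' := by
  refine Finsupp.addHom_ext' fun c => AddMonoidHom.ext_int ?_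
  obtain ⟨w, i, rfl⟩ := hneg.exists_rmodSmul_cls_eq c
  simp only [AddMonoidHom.comp_apply, Finsupp.singleAddHom_apply]
  rw [← wZQ_single, hf, hf', h]

theorem exists_equivariant_hom_of_fun {g : RootMod G → A}
    (hg : ∀ w c, g (rmodSmul G w c) = toAdd (ρ w) (g c)) :
    ∃ f : (RootMod G →₀ ℤ) →+ A,
      (∀ c, f (Finsupp.single c 1) = g c) ∧ ∀ w x, f (wZQ G w x) = toAdd (ρ w) (f x) := by
  set f : (RootMod G →₀ ℤ) →+ A := Finsupp.liftAddHom fun c => zmultiplesHom A (g c)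
  have hf : ∀ c m, f (Finsupp.single c m) = m • g c := fun c m =>
    Finsupp.liftAddHom_apply_single _ _ _
  refine ⟨f, fun c => by rw [hf, one_smul], fun w x => ?_⟩
  induction x using Finsupp.induction_linear with
  | zero => simp only [map_zero]
  | add x y hx hy => simp only [map_add, hx, hy]
  | single c m => rw [wZQ_single, hf, hf, hg, map_zsmul]

variable (hneg : NegDef G)
  (hnonadj : ∀ i j : I, ¬ G.Adj i j → toAdd (ρ (sGen G i)) (a j) = a j)
  (hadj : ∀ i j : I, G.Adj i j → toAdd (ρ (sGen G i)) (a j) = toAdd (ρ (sGen G j)) (a i))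
include hneg hnonadj hadj

theorem NegDef.liftPos_reflect_of_Bform {α : I → ℤ} (hα : IsRoot G α) (hα₀ : 0 ≤ α)
    {i : I} (hi : Bform G α (ε i) = 0 ∨ Bform G α (ε i) = -1) :
    liftPos ρ a (reflect G i α) = toAdd (ρ (sGen G i)) (liftPos ρ a α) := by
  induction h : (height α).toNat using Nat.strong_induction_on generalizing α i with
  | _ n ih =>
  have IH : LiftPosEquivariantBelow ρ a (height α) := fun β hβ hβ₀ hlt j hj =>
    ih _ (by have := hβ.height_pos hβ₀; omega) hβ hβ₀ hj rfl
  by_cases hs : ∃ j, α = ε j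
  · obtain ⟨j, rfl⟩ := hs
    exact liftPos_reflect_single ρ a hnonadj hi
  push Not at hs
  obtain ⟨k, hk, hFα⟩ := hneg.exists_liftPos_descent ρ a hα hα₀ hs
  rcases eq_or_ne i k with rfl | hik
  · rw [hFα, toAdd_sGen_sGen]
  rcases Bform_single_single_eq_zero_or_one (G := G) hik with hc | hc
  · exact hneg.liftPos_reflect_of_commute ρ a hα hα₀ IH hk hFα hc hi
  · exact hneg.liftPos_reflect_of_adj ρ a hadj hα hα₀ IH hk hFα hc hi

theorem NegDef.liftPos_reflect {α : I → ℤ} (hα : IsRoot G α) (hα₀ : 0 ≤ α) {i : I}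
    (hne : α ≠ ε i) :
    liftPos ρ a (reflect G i α) = toAdd (ρ (sGen G i)) (liftPos ρ a α) := by
  rcases le_or_gt (Bform G α (ε i)) 0 with hle | hpos
  · exact hneg.liftPos_reflect_of_Bform ρ a hnonadj hadj hα hα₀
      (hneg.Bform_single_eq_zero_or_neg_one hα hle hne)
  · have hB : Bform G (reflect G i α) (ε i) = -Bform G α (ε i) := by
      rw [Bform_reflect_left, Bform_single_self]
      ring
    have hne' : reflect G i α ≠ ε i := fun h => by
      have hα' : α = -ε i := by rw [← reflect_reflect G i α, h, reflect_single_self]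
      have := hα₀ i
      simp [hα'] at this
    have := hneg.liftPos_reflect_of_Bform ρ a hnonadj hadj (isRoot_reflect G i hα)
      (hneg.reflect_nonneg hα hα₀ hne) (hneg.Bform_single_eq_zero_or_neg_one
        (isRoot_reflect G i hα) (by omega) hne')
    rw [reflect_reflect] at this
    rw [this, toAdd_sGen_sGen]

theorem NegDef.liftRoot_reflect {α : I → ℤ} (hα : IsRoot G α) (i : I) :
    liftRoot ρ a (reflect G i α) = toAdd (ρ (sGen G i)) (liftRoot ρ a α) := by
  wlog hα₀ : 0 ≤ α generalizing α
  · have h := this (isRoot_neg G hα)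
      (neg_nonneg.2 ((hneg.nonneg_or_nonpos hα).resolve_left hα₀))
    rwa [reflect_neg, hneg.liftRoot_neg ρ a (isRoot_reflect G i hα),
      hneg.liftRoot_neg ρ a hα] at h
  rcases eq_or_ne α (ε i) with rfl | hne
  · rw [reflect_single_self, hneg.liftRoot_neg ρ a (isRoot_single G i), liftRoot_single,
      hnonadj i i (G.loopless.irrefl i)]
  · rw [liftRoot, liftRoot, if_pos (hneg.reflect_nonneg hα hα₀ hne), if_pos hα₀,
      hneg.liftPos_reflect ρ a hnonadj hadj hα hα₀ hne]

theorem NegDef.liftRoot_weyl (w : Weyl G) {α : I → ℤ} (hα : IsRoot G α) :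
    liftRoot ρ a (w.1 α) = toAdd (ρ w) (liftRoot ρ a α) := by
  induction w using Weyl.induction_on generalizing α with
  | one =>
    rw [map_one]
    rfl
  | mul i w ih =>
    rw [Weyl.coe_mul_apply, sGen_apply, hneg.liftRoot_reflect ρ a hnonadj hadj
      (weyl_isRoot G w.2 α hα), ih hα, toAdd_map_mul_apply]

theorem NegDef.exists_equivariant_fun : ∃ g : RootMod G → A,
    (∀ i, g (cls G i) = a i) ∧ ∀ w c, g (rmodSmul G w c) = toAdd (ρ w) (g c) := by
  refine ⟨Quotient.lift (fun α : Root G => liftRoot ρ a α.1) ?_, liftRoot_single ρ a,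
    fun w c => ?_⟩
  · rintro α β (h | h)
    · exact congrArg _ h
    · exact h ▸ hneg.liftRoot_neg ρ a β.2
  · induction c using Quotient.ind with
    | _ α => exact hneg.liftRoot_weyl ρ a hnonadj hadj w α.2

end Lift

end ADE

theorem exists_unique_equivariant_hom_from_ZPhiMod_general
    (G : SimpleGraph I) [DecidableRel G.Adj] (hneg : NegDef G)
    {A : Type*} [AddCommGroup A] (ρ : ↥(Weyl G) →* Multiplicative (AddAut A)) (a : I → A)
    (hnonadj : ∀ i j : I, ¬ G.Adj i j → (Multiplicative.toAdd (ρ (sGen G i))) (a j) = a j)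
    (hadj : ∀ i j : I, G.Adj i j →
      (Multiplicative.toAdd (ρ (sGen G i))) (a j) = (Multiplicative.toAdd (ρ (sGen G j))) (a i)) :
    ∃! f : (RootMod G →₀ ℤ) →+ A,
      (∀ i : I, f (Finsupp.single (cls G i) 1) = a i) ∧
      (∀ (w : ↥(Weyl G)) (x : RootMod G →₀ ℤ), f (wZQ G w x) = (Multiplicative.toAdd (ρ w)) (f x)) := by
  obtain ⟨g, hg_cls, hg⟩ := hneg.exists_equivariant_fun ρ a hnonadj hadj
  obtain ⟨f, hf_single, hf⟩ := exists_equivariant_hom_of_fun ρ hg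
  have hf_cls : ∀ i, f (Finsupp.single (cls G i) 1) = a i := fun i =>
    (hf_single _).trans (hg_cls i)
  refine ⟨f, ⟨hf_cls, hf⟩, fun f' ⟨hf'_cls, hf'⟩ => ?_⟩
  exact hneg.equivariant_hom_ext ρ hf' hf fun i => (hf'_cls i).trans (hf_cls i).symm

/-- universal property of `ℤ[Φ/±]`: given elements `a_i` of a `W`-module `A`
with `s_i · a_j = a_j` when `i,j` are non-adjacent (in particular when `i = j`) and
`s_i · a_j = s_j · a_i` when `i,j` are adjacent, there is a unique `W`-equivariant
homomorphism `ℤ[Φ/±] → A` with `t_{[e_i]} ↦ a_i`. -/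
theorem exists_unique_equivariant_hom_from_ZPhiMod
    (G : SimpleGraph I) [DecidableRel G.Adj] (hconn : G.Connected) (hneg : NegDef G)
    {A : Type*} [AddCommGroup A] (ρ : ↥(Weyl G) →* Multiplicative (AddAut A)) (a : I → A)
    (hnonadj : ∀ i j : I, ¬ G.Adj i j → (Multiplicative.toAdd (ρ (sGen G i))) (a j) = a j)
    (hadj : ∀ i j : I, G.Adj i j →
      (Multiplicative.toAdd (ρ (sGen G i))) (a j) = (Multiplicative.toAdd (ρ (sGen G j))) (a i)) :
    ∃! f : (RootMod G →₀ ℤ) →+ A,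
      (∀ i : I, f (Finsupp.single (cls G i) 1) = a i) ∧
      (∀ (w : ↥(Weyl G)) (x : RootMod G →₀ ℤ), f (wZQ G w x) = (Multiplicative.toAdd (ρ w)) (f x)) :=
  exists_unique_equivariant_hom_from_ZPhiMod_general G hneg ρ a hnonadj hadj
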